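/- Let F be a field, q ∈ F and f, g ∈ F[h] with deg f > 1. Suppose q is a primitive ℓ-th root of unity and there exists a ∈ F[h] with g(h) = σ(a) − q a, where σ is the F-algebra endomorphism of F[h] with σ(h) = f(h). Set Z = q(xy − a). Then the center of H_q(f,g) equals the subalgebra F[Z^ℓ] generated by Z^ℓ. -/

import Mathlib

open Polynomial

/-- The three generators `x`, `y`, `h` of a quantum generalized Heisenberg algebra. -/
inductive QGHAGen : Type
  | x : QGHAGen
  | y : QGHAGen
  | h : QGHAGen

/-- The defining relations of the quantum generalized Heisenberg algebra `H_q(f,g)`: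
`h*x = x*f(h)`, `y*h = f(h)*y`, and `y*x - q*(x*y) = g(h)`. -/
inductive QGHARel (F : Type*) [Field F] (q : F) (f g : F[X]) :
    FreeAlgebra F QGHAGen → FreeAlgebra F QGHAGen → Prop
  | hx : QGHARel F q f g
      (FreeAlgebra.ι F QGHAGen.h * FreeAlgebra.ι F QGHAGen.x)
      (FreeAlgebra.ι F QGHAGen.x * aeval (FreeAlgebra.ι F QGHAGen.h) f)
  | yh : QGHARel F q f g
      (FreeAlgebra.ι F QGHAGen.y * FreeAlgebra.ι F QGHAGen.h)
      (aeval (FreeAlgebra.ι F QGHAGen.h) f * FreeAlgebra.ι F QGHAGen.y)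
  | yx : QGHARel F q f g
      (FreeAlgebra.ι F QGHAGen.y * FreeAlgebra.ι F QGHAGen.x)
      (q • (FreeAlgebra.ι F QGHAGen.x * FreeAlgebra.ι F QGHAGen.y)
        + aeval (FreeAlgebra.ι F QGHAGen.h) g)

/-- The quantum generalized Heisenberg algebra `H_q(f,g)`. -/
def QGHA (F : Type*) [Field F] (q : F) (f g : F[X]) : Type _ :=
  RingQuot (QGHARel F q f g)

namespace QGHA

variable {F : Type*} [Field F] (q : F) (f g : F[X])

instance : Ring (QGHA F q f g) :=
  inferInstanceAs (Ring (RingQuot (QGHARel F q f g)))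

instance : Algebra F (QGHA F q f g) :=
  inferInstanceAs (Algebra F (RingQuot (QGHARel F q f g)))

/-- The generator `x` of `H_q(f,g)`. -/
def x : QGHA F q f g :=
  RingQuot.mkAlgHom F (QGHARel F q f g) (FreeAlgebra.ι F QGHAGen.x)

/-- The generator `y` of `H_q(f,g)`. -/
def y : QGHA F q f g :=
  RingQuot.mkAlgHom F (QGHARel F q f g) (FreeAlgebra.ι F QGHAGen.y)

/-- The generator `h` of `H_q(f,g)`. -/
def h : QGHA F q f g :=
  RingQuot.mkAlgHom F (QGHARel F q f g) (FreeAlgebra.ι F QGHAGen.h)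

end QGHA

/-!
Every element of `H_q(f,g)` has a unique normal form `∑ x^m p_{mn}(h) y^n`. Spanning is a
rewriting argument; uniqueness comes from letting the algebra act on families
`ℕ × ℕ → F[X]` of coefficients, so that the normal form of `w` is read off from the action of
`w` on the vacuum `Pi.single (0, 0) 1`.

Let `c` be central. Commuting with `h` makes its coefficients diagonal, because the
polynomials `σ^j(h)` have the pairwise distinct degrees `(deg f)^j`. If `(N, N)` is the top
diagonal entry, commuting with `y` gives `p_N = q^N σ(p_N)`; as `deg f > 1` this forces `p_N`
to be a constant and, if `p_N ≠ 0`, `q^N = 1`, i.e. `ℓ ∣ N`. The element `Z^N` is then central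
with top coefficient a nonzero constant at `(N, N)`, so subtracting a multiple of it lowers `N`.
Conversely `Z x = q x Z`, `y Z = q Z y` and `Z h = h Z` make `Z^ℓ` central.
-/

theorem SemiconjBy.aeval {R A : Type*} [CommSemiring R] [Semiring A] [Algebra R A] {a b c : A}
    (h : SemiconjBy a b c) (p : R[X]) : SemiconjBy a (aeval b p) (aeval c p) := by
  induction p using Polynomial.induction_on' with
  | add p p' hp hp' => simpa only [map_add] using hp.add_right hp'
  | monomial n r =>
    simpa only [aeval_monomial] using
      SemiconjBy.mul_right (Algebra.commute_algebraMap_right r a) (h.pow_right n)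

theorem pow_mul_eq_smul_mul_pow {R A : Type*} [CommSemiring R] [Semiring A] [Algebra R A]
    {a b : A} {c : R} (h : a * b = c • (b * a)) (k : ℕ) : a ^ k * b = c ^ k • (b * a ^ k) := by
  induction k with
  | zero => simp
  | succ k ih =>
    rw [pow_succ, mul_assoc, h, mul_smul_comm, ← mul_assoc, ih, smul_mul_assoc, smul_smul,
      mul_assoc, ← pow_succ, ← pow_succ']

theorem mul_pow_eq_smul_pow_mul {R A : Type*} [CommSemiring R] [Semiring A] [Algebra R A]
    {a b : A} {c : R} (h : b * a = c • (a * b)) (k : ℕ) : b * a ^ k = c ^ k • (a ^ k * b) := by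
  induction k with
  | zero => simp
  | succ k ih =>
    rw [pow_succ', ← mul_assoc, h, smul_mul_assoc, mul_assoc, ih, mul_smul_comm, smul_smul,
      ← mul_assoc, ← pow_succ', ← pow_succ']

theorem Polynomial.eq_C_and_eq_one_of_eq_smul_comp {F : Type*} [Field F] {f p : F[X]} {c : F}
    (hf : 1 < f.natDegree) (hp : p ≠ 0) (h : p = c • p.comp f) : p = C (p.coeff 0) ∧ c = 1 := by
  have hc : c ≠ 0 := by rintro rfl; exact hp (by rwa [zero_smul] at h)
  have hdeg : p.natDegree = p.natDegree * f.natDegree := by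
    conv_lhs => rw [h, natDegree_smul _ hc, natDegree_comp]
  obtain ⟨α, rfl⟩ : ∃ α, p = C α := ⟨_, eq_C_of_natDegree_eq_zero (by nlinarith)⟩
  refine ⟨by rw [coeff_C_zero], ?_⟩
  rw [C_comp, smul_C, smul_eq_mul, C_inj] at h
  exact (mul_eq_right₀ (C_ne_zero.1 hp)).1 h.symm

namespace QGHA

variable {F : Type*} [Field F]

section Lift

variable {q : F} {f g : F[X]} {A : Type*} [Ring A] [Algebra F A]

def lift (X Y H : A) (hHX : H * X = X * aeval H f) (hYH : Y * H = aeval H f * Y)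
    (hYX : Y * X = q • (X * Y) + aeval H g) : QGHA F q f g →ₐ[F] A :=
  RingQuot.liftAlgHom F ⟨FreeAlgebra.lift F fun | .x => X | .y => Y | .h => H, by
    rintro _ _ ⟨⟩ <;> simp only [map_mul, map_add, map_smul, ← aeval_algHom_apply,
      FreeAlgebra.lift_ι_apply] <;> assumption⟩

variable (X Y H : A) (hHX : H * X = X * aeval H f) (hYH : Y * H = aeval H f * Y)
    (hYX : Y * X = q • (X * Y) + aeval H g)

@[simp] lemma lift_x : lift X Y H hHX hYH hYX (x q f g) = X :=
  (RingQuot.liftAlgHom_mkAlgHom_apply F _ _ _).trans (FreeAlgebra.lift_ι_apply _ _)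

@[simp] lemma lift_y : lift X Y H hHX hYH hYX (y q f g) = Y :=
  (RingQuot.liftAlgHom_mkAlgHom_apply F _ _ _).trans (FreeAlgebra.lift_ι_apply _ _)

@[simp] lemma lift_h : lift X Y H hHX hYH hYX (h q f g) = H :=
  (RingQuot.liftAlgHom_mkAlgHom_apply F _ _ _).trans (FreeAlgebra.lift_ι_apply _ _)

end Lift

variable (q : F) (f g : F[X])

local notation "𝐱" => x q f g
local notation "𝐲" => y q f g
local notation "𝐡" => h q f g
local notation "ev" => aeval (h q f g)
local notation "σ" => (aeval f : F[X] →ₐ[F] F[X])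

lemma h_mul_x : 𝐡 * 𝐱 = 𝐱 * ev f := by
  have := RingQuot.mkAlgHom_rel F (QGHARel.hx (F := F) (q := q) (f := f) (g := g))
  rwa [map_mul, map_mul, ← aeval_algHom_apply] at this

lemma y_mul_h : 𝐲 * 𝐡 = ev f * 𝐲 := by
  have := RingQuot.mkAlgHom_rel F (QGHARel.yh (F := F) (q := q) (f := f) (g := g))
  rwa [map_mul, map_mul, ← aeval_algHom_apply] at this

lemma y_mul_x : 𝐲 * 𝐱 = q • (𝐱 * 𝐲) + ev g := by
  have := RingQuot.mkAlgHom_rel F (QGHARel.yx (F := F) (q := q) (f := f) (g := g))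
  rwa [map_mul, map_add, map_smul, map_mul, ← aeval_algHom_apply] at this

@[elab_as_elim]
lemma induction {P : QGHA F q f g → Prop} (algebraMap : ∀ r : F, P (algebraMap F _ r))
    (x : P 𝐱) (y : P 𝐲) (h : P 𝐡) (add : ∀ a b, P a → P b → P (a + b))
    (mul : ∀ a b, P a → P b → P (a * b)) (w : QGHA F q f g) : P w := by
  obtain ⟨w, rfl⟩ := RingQuot.mkAlgHom_surjective F (QGHARel F q f g) w
  induction w using FreeAlgebra.induction with
  | grade0 r => rw [AlgHom.commutes]; exact algebraMap r
  | grade1 t => cases t <;> assumption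
  | add a b ha hb => rw [map_add]; exact add _ _ ha hb
  | mul a b ha hb => rw [map_mul]; exact mul _ _ ha hb

lemma mem_center_of_commute {z : QGHA F q f g} (hx : z * 𝐱 = 𝐱 * z) (hy : z * 𝐲 = 𝐲 * z)
    (hh : z * 𝐡 = 𝐡 * z) : z ∈ Subalgebra.center F (QGHA F q f g) := by
  rw [Subalgebra.mem_center_iff]
  intro w
  induction w using induction q f g with
  | algebraMap r => exact Algebra.commutes r z
  | x => exact hx.symm
  | y => exact hy.symm
  | h => exact hh.symm
  | add a b ha hb => rw [add_mul, mul_add, ha, hb]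
  | mul a b ha hb => rw [mul_assoc, hb, ← mul_assoc, ha, mul_assoc]

lemma sigma_pow_succ_X (m : ℕ) : (σ ^ (m + 1)) X = (σ ^ m) f := by
  rw [pow_succ, AlgHom.mul_apply, aeval_X]

lemma sigma_sigma_pow (m : ℕ) (p : F[X]) : σ ((σ ^ m) p) = (σ ^ (m + 1)) p := by
  rw [pow_succ', AlgHom.mul_apply]

lemma ev_mul_x (p : F[X]) : ev p * 𝐱 = 𝐱 * ev (σ p) := by
  have := SemiconjBy.aeval (h_mul_x q f g).symm p
  rw [aeval_algHom_apply] at this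
  exact this.symm

lemma y_mul_ev (p : F[X]) : 𝐲 * ev p = ev (σ p) * 𝐲 := by
  have := SemiconjBy.aeval (y_mul_h q f g) p
  rwa [aeval_algHom_apply] at this

lemma ev_mul_x_pow (m : ℕ) (p : F[X]) : ev p * 𝐱 ^ m = 𝐱 ^ m * ev ((σ ^ m) p) := by
  induction m generalizing p with
  | zero => simp
  | succ m ih =>
    rw [pow_succ', ← mul_assoc, ev_mul_x, mul_assoc, ih, ← mul_assoc, pow_succ, AlgHom.mul_apply]

lemma y_pow_mul_ev (n : ℕ) (p : F[X]) : 𝐲 ^ n * ev p = ev ((σ ^ n) p) * 𝐲 ^ n := by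
  induction n generalizing p with
  | zero => simp
  | succ n ih =>
    rw [pow_succ, mul_assoc, y_mul_ev, ← mul_assoc, ih, mul_assoc, pow_succ, AlgHom.mul_apply]

lemma h_mul_x_pow (m : ℕ) : 𝐡 * 𝐱 ^ m = 𝐱 ^ m * ev ((σ ^ m) X) := by
  simpa only [aeval_X] using ev_mul_x_pow q f g m X

lemma y_pow_mul_h (n : ℕ) : 𝐲 ^ n * 𝐡 = ev ((σ ^ n) X) * 𝐲 ^ n := by
  simpa only [aeval_X] using y_pow_mul_ev q f g n X

noncomputable def commPoly : ℕ → F[X]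
  | 0 => 0
  | m + 1 => q • commPoly m + (σ ^ m) g

lemma commPoly_succ (m : ℕ) : commPoly q f g (m + 1) = q • commPoly q f g m + (σ ^ m) g := rfl

lemma y_mul_x_pow_succ (m : ℕ) :
    𝐲 * 𝐱 ^ (m + 1) = q ^ (m + 1) • (𝐱 ^ (m + 1) * 𝐲) + 𝐱 ^ m * ev (commPoly q f g (m + 1)) := by
  induction m with
  | zero => simp [y_mul_x, commPoly]
  | succ m ih =>
    rw [pow_succ' 𝐱 (m + 1), ← mul_assoc, y_mul_x, add_mul, smul_mul_assoc, mul_assoc, ih,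
      ev_mul_x_pow, commPoly_succ q f g (m + 1), map_add, map_smul]
    simp only [mul_add, smul_add, mul_smul_comm, smul_smul, ← mul_assoc, ← pow_succ']
    module

noncomputable def monom (m n : ℕ) : F[X] →ₗ[F] QGHA F q f g :=
  LinearMap.mulLeft F (𝐱 ^ m) ∘ₗ LinearMap.mulRight F (𝐲 ^ n) ∘ₗ (aeval 𝐡).toLinearMap

section Monomials

variable (m n : ℕ) (p : F[X])

lemma monom_apply : monom q f g m n p = 𝐱 ^ m * (ev p * 𝐲 ^ n) := rfl

lemma x_mul_monom : 𝐱 * monom q f g m n p = monom q f g (m + 1) n p := by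
  rw [monom_apply, monom_apply, ← mul_assoc, ← pow_succ']

lemma h_mul_monom : 𝐡 * monom q f g m n p = monom q f g m n ((σ ^ m) X * p) := by
  rw [monom_apply, monom_apply, ← mul_assoc, h_mul_x_pow, map_mul]
  simp only [mul_assoc]

lemma y_mul_monom_zero : 𝐲 * monom q f g 0 n p = monom q f g 0 (n + 1) (σ p) := by
  rw [monom_apply, monom_apply, pow_zero, one_mul, one_mul, ← mul_assoc, y_mul_ev, mul_assoc,
    ← pow_succ']

lemma y_mul_monom_succ :
    𝐲 * monom q f g (m + 1) n p =
      q ^ (m + 1) • monom q f g (m + 1) (n + 1) (σ p) +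
        monom q f g m n (commPoly q f g (m + 1) * p) := by
  rw [monom_apply, monom_apply, monom_apply, ← mul_assoc, y_mul_x_pow_succ, add_mul,
    smul_mul_assoc, mul_assoc, mul_assoc, ← mul_assoc 𝐲, y_mul_ev, mul_assoc, ← pow_succ', map_mul]
  simp only [mul_assoc]

lemma monom_mul_y : monom q f g m n p * 𝐲 = monom q f g m (n + 1) p := by
  rw [monom_apply, monom_apply, mul_assoc, mul_assoc, ← pow_succ]

lemma monom_mul_h : monom q f g m n p * 𝐡 = monom q f g m n (p * (σ ^ n) X) := by
  rw [monom_apply, monom_apply, mul_assoc, mul_assoc, y_pow_mul_h, map_mul]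
  simp only [mul_assoc]

end Monomials

section Representation

/- The action of `x`, `y`, `h` on coefficient families, read off from `x_mul_monom`,
`y_mul_monom_zero`, `y_mul_monom_succ` and `h_mul_monom`. -/

noncomputable def xOp : Module.End F (ℕ × ℕ → F[X]) :=
  LinearMap.pi fun
    | (0, _) => 0
    | (m + 1, n) => LinearMap.proj (m, n)

noncomputable def yOp : Module.End F (ℕ × ℕ → F[X]) :=
  LinearMap.pi fun
    | (m, 0) => LinearMap.mulLeft F (commPoly q f g (m + 1)) ∘ₗ LinearMap.proj (m + 1, 0)
    | (m, n + 1) => q ^ m • ((σ).toLinearMap ∘ₗ LinearMap.proj (m, n)) +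
        LinearMap.mulLeft F (commPoly q f g (m + 1)) ∘ₗ LinearMap.proj (m + 1, n + 1)

noncomputable def hOp : Module.End F (ℕ × ℕ → F[X]) :=
  Algebra.lmul F _ fun i => (σ ^ i.1) X

variable (P : ℕ × ℕ → F[X]) (m n : ℕ)

@[simp] lemma xOp_apply_zero : xOp P (0, n) = 0 := rfl

@[simp] lemma xOp_apply_succ : xOp P (m + 1, n) = P (m, n) := rfl

@[simp] lemma yOp_apply_zero :
    yOp q f g P (m, 0) = commPoly q f g (m + 1) * P (m + 1, 0) := rfl

@[simp] lemma yOp_apply_succ :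
    yOp q f g P (m, n + 1) = q ^ m • σ (P (m, n)) + commPoly q f g (m + 1) * P (m + 1, n + 1) :=
  rfl

@[simp] lemma aeval_hOp_apply (u : F[X]) : aeval (hOp f) u P (m, n) = (σ ^ m) u * P (m, n) := by
  rw [hOp, aeval_algHom_apply, Algebra.coe_lmul_eq_mul, LinearMap.mul_apply', Pi.mul_apply,
    aeval_pi_apply₂, aeval_algHom_apply, aeval_X_left_apply]

@[simp] lemma hOp_apply : hOp f P (m, n) = (σ ^ m) X * P (m, n) := by
  simpa only [aeval_X] using aeval_hOp_apply f P m n X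

lemma hOp_mul_xOp : hOp f * xOp = xOp * aeval (hOp f) f := by
  refine LinearMap.ext fun P => funext fun ⟨m, n⟩ => ?_
  rcases m with _ | m <;> simp [-AlgHom.coe_pow, sigma_pow_succ_X]

lemma yOp_mul_hOp : yOp q f g * hOp f = aeval (hOp f) f * yOp q f g := by
  refine LinearMap.ext fun P => funext fun ⟨m, n⟩ => ?_
  rcases n with _ | n <;>
    simp only [Module.End.mul_apply, yOp_apply_zero, yOp_apply_succ, hOp_apply, aeval_hOp_apply,
      map_mul, sigma_sigma_pow, sigma_pow_succ_X, smul_eq_C_mul, map_pow] <;> ring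

lemma yOp_mul_xOp : yOp q f g * xOp = q • (xOp * yOp q f g) + aeval (hOp f) g := by
  refine LinearMap.ext fun P => funext fun ⟨m, n⟩ => ?_
  rcases m with _ | m <;> rcases n with _ | n <;>
    simp only [Module.End.mul_apply, LinearMap.add_apply, LinearMap.smul_apply, Pi.add_apply,
      Pi.smul_apply, xOp_apply_zero, xOp_apply_succ, yOp_apply_zero, yOp_apply_succ,
      aeval_hOp_apply, commPoly, pow_zero, AlgHom.one_apply, map_zero, smul_eq_C_mul, map_pow] <;>
    ring

noncomputable def rep : QGHA F q f g →ₐ[F] Module.End F (ℕ × ℕ → F[X]) :=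
  lift xOp (yOp q f g) (hOp f) (hOp_mul_xOp f) (yOp_mul_hOp q f g) (yOp_mul_xOp q f g)

end Representation

/-- `coeff q f g w (m, n)` is the coefficient `p` of `x^m p(h) y^n` in the normal form of `w`. -/
noncomputable def coeff : QGHA F q f g →ₗ[F] ℕ × ℕ → F[X] :=
  LinearMap.applyₗ (Pi.single (0, 0) 1) ∘ₗ (rep q f g).toLinearMap

section Coefficients

lemma coeff_mul (u w : QGHA F q f g) : coeff q f g (u * w) = rep q f g u (coeff q f g w) := by
  simp [coeff]

lemma coeff_one : coeff q f g 1 = Pi.single (0, 0) 1 := by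
  simp [coeff]

variable (w : QGHA F q f g) (j k : ℕ)

@[simp] lemma coeff_x_mul_zero : coeff q f g (𝐱 * w) (0, k) = 0 := by
  simp [coeff_mul, rep]

@[simp] lemma coeff_x_mul_succ : coeff q f g (𝐱 * w) (j + 1, k) = coeff q f g w (j, k) := by
  simp [coeff_mul, rep]

@[simp] lemma coeff_ev_mul (p : F[X]) :
    coeff q f g (ev p * w) (j, k) = (σ ^ j) p * coeff q f g w (j, k) := by
  simp [coeff_mul, rep, ← aeval_algHom_apply, -AlgHom.coe_pow]

@[simp] lemma coeff_h_mul : coeff q f g (𝐡 * w) (j, k) = (σ ^ j) X * coeff q f g w (j, k) := by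
  simpa only [aeval_X] using coeff_ev_mul q f g w j k X

@[simp] lemma coeff_y_mul_zero :
    coeff q f g (𝐲 * w) (j, 0) = commPoly q f g (j + 1) * coeff q f g w (j + 1, 0) := by
  simp [coeff_mul, rep]

@[simp] lemma coeff_y_mul_succ :
    coeff q f g (𝐲 * w) (j, k + 1) =
      q ^ j • σ (coeff q f g w (j, k)) + commPoly q f g (j + 1) * coeff q f g w (j + 1, k + 1) := by
  simp [coeff_mul, rep]

lemma coeff_y_pow (n : ℕ) : coeff q f g (𝐲 ^ n) = Pi.single (0, n) 1 := by
  induction n with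
  | zero => rw [pow_zero, coeff_one]
  | succ n ih =>
    ext1 ⟨j, k⟩
    rcases k with _ | k <;> simp only [pow_succ', coeff_y_mul_zero, coeff_y_mul_succ, ih,
      Pi.single_apply, Prod.mk.injEq] <;> split_ifs <;> simp_all

lemma coeff_monom (m n : ℕ) (p : F[X]) : coeff q f g (monom q f g m n p) = Pi.single (m, n) p := by
  induction m with
  | zero =>
    ext1 ⟨j, k⟩
    simp only [monom_apply, pow_zero, one_mul, coeff_ev_mul, coeff_y_pow, Pi.single_apply,
      Prod.mk.injEq]
    split_ifs <;> simp_all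
  | succ m ih =>
    ext1 ⟨j, k⟩
    rcases j with _ | j <;> simp [← x_mul_monom, ih, Pi.single_apply]

end Coefficients

noncomputable def ofCoeffs : ((ℕ × ℕ) →₀ F[X]) →ₗ[F] QGHA F q f g :=
  Finsupp.lsum F fun i => monom q f g i.1 i.2

lemma ofCoeffs_single (m n : ℕ) (p : F[X]) :
    ofCoeffs q f g (Finsupp.single (m, n) p) = monom q f g m n p :=
  Finsupp.lsum_single F _ _ _

lemma coeff_ofCoeffs (v : (ℕ × ℕ) →₀ F[X]) : coeff q f g (ofCoeffs q f g v) = v := by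
  induction v using Finsupp.induction_linear with
  | zero => simp
  | add v v' hv hv' => simp [hv, hv']
  | single i p => rw [ofCoeffs_single, coeff_monom, Finsupp.single_eq_pi_single]

lemma submodule_eq_top_of_one_mem_of_mul_mem {S : Submodule F (QGHA F q f g)} (one : 1 ∈ S)
    (x : ∀ s ∈ S, 𝐱 * s ∈ S) (y : ∀ s ∈ S, 𝐲 * s ∈ S) (h : ∀ s ∈ S, 𝐡 * s ∈ S) : S = ⊤ := by
  suffices ∀ w, ∀ s ∈ S, w * s ∈ S from
    Submodule.eq_top_iff'.2 fun w => by simpa using this w 1 one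
  intro w
  induction w using induction q f g with
  | algebraMap r =>
    exact fun s hs => by simpa [Algebra.algebraMap_eq_smul_one] using S.smul_mem r hs
  | x => exact x
  | y => exact y
  | h => exact h
  | add a b ha hb => exact fun s hs => by simpa [add_mul] using S.add_mem (ha s hs) (hb s hs)
  | mul a b ha hb => exact fun s hs => by simpa [mul_assoc] using ha _ (hb s hs)

lemma monom_mem_range (m n : ℕ) (p : F[X]) :
    monom q f g m n p ∈ LinearMap.range (ofCoeffs q f g) :=
  ⟨_, ofCoeffs_single q f g m n p⟩

lemma mul_ofCoeffs_mem_range {u : QGHA F q f g}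
    (hu : ∀ m n p, u * monom q f g m n p ∈ LinearMap.range (ofCoeffs q f g))
    (v : (ℕ × ℕ) →₀ F[X]) : u * ofCoeffs q f g v ∈ LinearMap.range (ofCoeffs q f g) := by
  induction v using Finsupp.induction_linear with
  | zero => simp
  | add v v' hv hv' => simpa [mul_add] using add_mem hv hv'
  | single i p => rw [← i.eta, ofCoeffs_single]; exact hu i.1 i.2 p

lemma ofCoeffs_surjective : Function.Surjective (ofCoeffs q f g) := by
  refine LinearMap.range_eq_top.1 (submodule_eq_top_of_one_mem_of_mul_mem q f g ?_ ?_ ?_ ?_)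
  · simpa [monom_apply] using monom_mem_range q f g 0 0 1
  all_goals rintro _ ⟨v, rfl⟩; refine mul_ofCoeffs_mem_range q f g (fun m n p => ?_) v
  · rw [x_mul_monom]; exact monom_mem_range ..
  · rcases m with _ | m
    · rw [y_mul_monom_zero]; exact monom_mem_range ..
    · rw [y_mul_monom_succ]
      exact add_mem (Submodule.smul_mem _ _ (monom_mem_range ..)) (monom_mem_range ..)
  · rw [h_mul_monom]; exact monom_mem_range ..

lemma coeff_injective : Function.Injective (coeff q f g) := by
  intro w w' hw
  obtain ⟨v, rfl⟩ := ofCoeffs_surjective q f g w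
  obtain ⟨v', rfl⟩ := ofCoeffs_surjective q f g w'
  rw [coeff_ofCoeffs, coeff_ofCoeffs] at hw
  rw [DFunLike.coe_injective hw]

@[elab_as_elim]
lemma induction_monom {P : QGHA F q f g → Prop} (zero : P 0) (add : ∀ a b, P a → P b → P (a + b))
    (monom : ∀ m n p, P (monom q f g m n p)) (w : QGHA F q f g) : P w := by
  obtain ⟨v, rfl⟩ := ofCoeffs_surjective q f g w
  induction v using Finsupp.induction_linear with
  | zero => simpa using zero
  | add v v' hv hv' => simpa using add _ _ hv hv'
  | single i p => rw [← i.eta, ofCoeffs_single]; exact monom i.1 i.2 p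

lemma coeff_mul_y (w : QGHA F q f g) (j k : ℕ) :
    coeff q f g (w * 𝐲) (j, k + 1) = coeff q f g w (j, k) := by
  induction w using induction_monom q f g with
  | zero => simp
  | add a b ha hb => simp [add_mul, ha, hb]
  | monom m n p => simp [monom_mul_y, coeff_monom, Pi.single_apply]

lemma coeff_mul_h (w : QGHA F q f g) (j k : ℕ) :
    coeff q f g (w * 𝐡) (j, k) = coeff q f g w (j, k) * (σ ^ k) X := by
  induction w using induction_monom q f g with
  | zero => simp
  | add a b ha hb => simp [add_mul, ha, hb]
  | monom m n p =>
    simp only [monom_mul_h, coeff_monom, Pi.single_apply, Prod.mk.injEq]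
    split_ifs with hjk
    · rw [hjk.2]
    · rw [zero_mul]

def xDegreeLT (N : ℕ) : Submodule F (QGHA F q f g) where
  carrier := {w | ∀ j k, N ≤ j → coeff q f g w (j, k) = 0}
  add_mem' ha hb j k hj := by simp [ha j k hj, hb j k hj]
  zero_mem' _ _ _ := by simp
  smul_mem' r w hw j k hj := by simp [hw j k hj]

lemma exists_mem_xDegreeLT (w : QGHA F q f g) : ∃ N, w ∈ xDegreeLT q f g N := by
  obtain ⟨v, rfl⟩ := ofCoeffs_surjective q f g w
  refine ⟨v.support.sup Prod.fst + 1, fun j k hj => ?_⟩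
  rw [coeff_ofCoeffs, ← Finsupp.notMem_support_iff]
  exact fun hmem => (Finset.le_sup (f := Prod.fst) hmem).not_gt hj

lemma eq_zero_of_mem_xDegreeLT_zero {w : QGHA F q f g} (hw : w ∈ xDegreeLT q f g 0) : w = 0 :=
  coeff_injective q f g <| funext fun ⟨j, k⟩ => by simpa using hw j k j.zero_le

lemma y_mul_mem_xDegreeLT {N : ℕ} {w : QGHA F q f g} (hw : w ∈ xDegreeLT q f g N) :
    𝐲 * w ∈ xDegreeLT q f g N := by
  rintro j (_ | k) hj <;> simp [hw j _ hj, hw (j + 1) _ (by omega)]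

lemma natDegree_sigma_pow_X (m : ℕ) : ((σ ^ m) X).natDegree = f.natDegree ^ m := by
  induction m with
  | zero => simp
  | succ m ih => rw [← sigma_sigma_pow, ← comp_eq_aeval, natDegree_comp, ih, pow_succ]

lemma coeff_eq_zero_of_commute_h (hf : 1 < f.natDegree) {c : QGHA F q f g} (hc : 𝐡 * c = c * 𝐡)
    {j k : ℕ} (hjk : j ≠ k) : coeff q f g c (j, k) = 0 := by
  have hσ : (σ ^ j) X ≠ (σ ^ k) X := fun he => hjk <|
    Nat.pow_right_injective hf (by simpa only [natDegree_sigma_pow_X] using congrArg natDegree he)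
  have := congrArg (coeff q f g · (j, k)) hc
  simp only [coeff_h_mul, coeff_mul_h] at this
  exact (mul_eq_zero.1 (by rw [sub_mul, this, mul_comm, sub_self])).resolve_left
    (sub_ne_zero.2 hσ)

lemma mem_xDegreeLT_of_succ (hf : 1 < f.natDegree) {c : QGHA F q f g} (hc : 𝐡 * c = c * 𝐡)
    {N : ℕ} (hN : c ∈ xDegreeLT q f g (N + 1)) (hNN : coeff q f g c (N, N) = 0) :
    c ∈ xDegreeLT q f g N := by
  intro j k hj
  rcases eq_or_ne j k with rfl | hjk
  · rcases hj.eq_or_lt with rfl | hj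
    · exact hNN
    · exact hN j j hj
  · exact coeff_eq_zero_of_commute_h q f g hf hc hjk

lemma coeff_diag_of_commute_y {c : QGHA F q f g} (hc : 𝐲 * c = c * 𝐲) (m : ℕ) :
    coeff q f g c (m, m) =
      q ^ m • σ (coeff q f g c (m, m)) + commPoly q f g (m + 1) * coeff q f g c (m + 1, m + 1) := by
  rw [← coeff_y_mul_succ, hc, coeff_mul_y]

variable (a : F[X])

noncomputable def Z : QGHA F q f g := q • (𝐱 * 𝐲 - ev a)

lemma coeff_Z_mul (w : QGHA F q f g) (j k : ℕ) :
    coeff q f g (Z q f g a * w) (j + 1, k) =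
      q • (coeff q f g (𝐲 * w) (j, k) - (σ ^ (j + 1)) a * coeff q f g w (j + 1, k)) := by
  simp [Z, sub_mul, mul_assoc, -AlgHom.coe_pow]

lemma Z_mul_mem_xDegreeLT {N : ℕ} {w : QGHA F q f g} (hw : w ∈ xDegreeLT q f g N) :
    Z q f g a * w ∈ xDegreeLT q f g (N + 1) := by
  rintro (_ | j) k hj
  · omega
  · rw [coeff_Z_mul, y_mul_mem_xDegreeLT q f g hw j k (by omega), hw _ _ (by omega)]
    simp

lemma Z_pow_mem_xDegreeLT (m : ℕ) : Z q f g a ^ m ∈ xDegreeLT q f g (m + 1) := by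
  induction m with
  | zero =>
    rintro j k hj
    rw [pow_zero, coeff_one, Pi.single_apply, if_neg (by grind)]
  | succ m ih => simpa only [pow_succ'] using Z_mul_mem_xDegreeLT q f g a ih

lemma coeff_Z_pow_self (m : ℕ) :
    coeff q f g (Z q f g a ^ m) (m, m) = C (q ^ (m + 1).choose 2) := by
  induction m with
  | zero => simp [coeff_one]
  | succ m ih =>
    have hm := Z_pow_mem_xDegreeLT q f g a m
    rw [pow_succ', coeff_Z_mul, coeff_y_mul_succ, ih, hm _ _ le_rfl,
      Nat.choose_succ_succ' (m + 1), Nat.choose_one_right, pow_add, aeval_C, algebraMap_eq]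
    simp only [mul_zero, add_zero, sub_zero, smul_eq_C_mul, map_pow]
    ring

lemma commute_Z_h : Commute (Z q f g a) 𝐡 := by
  have hah : ev a * 𝐡 = 𝐡 * ev a := by simpa using ((Commute.all a X).map (aeval 𝐡)).eq
  rw [Commute, SemiconjBy, Z, smul_mul_assoc, mul_smul_comm, sub_mul, mul_sub, mul_assoc,
    y_mul_h, ← mul_assoc, ← h_mul_x, mul_assoc, hah]

variable {a}

lemma Z_mul_x (hg : g = σ a - q • a) : Z q f g a * 𝐱 = q • (𝐱 * Z q f g a) := by
  have hevg : ev g = ev (σ a) - q • ev a := by rw [congrArg ev hg, map_sub, map_smul]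
  rw [Z, smul_mul_assoc, mul_smul_comm, sub_mul, mul_assoc, y_mul_x, hevg, ev_mul_x]
  simp only [mul_sub, mul_add, mul_smul_comm, ← mul_assoc]
  module

lemma y_mul_Z (hg : g = σ a - q • a) : 𝐲 * Z q f g a = q • (Z q f g a * 𝐲) := by
  have hevg : ev g = ev (σ a) - q • ev a := by rw [congrArg ev hg, map_sub, map_smul]
  rw [Z, smul_mul_assoc, mul_smul_comm, mul_sub, ← mul_assoc, y_mul_x, hevg, y_mul_ev]
  simp only [sub_mul, add_mul, smul_mul_assoc, mul_assoc]
  module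

lemma Z_pow_mem_center (hg : g = σ a - q • a) {k : ℕ} (hk : q ^ k = 1) :
    Z q f g a ^ k ∈ Subalgebra.center F (QGHA F q f g) := by
  refine mem_center_of_commute q f g ?_ ?_ ((commute_Z_h q f g a).pow_left k)
  · rw [pow_mul_eq_smul_mul_pow (Z_mul_x q f g hg), hk, one_smul]
  · rw [mul_pow_eq_smul_pow_mul (y_mul_Z q f g hg), hk, one_smul]

lemma exists_mem_adjoin_coeff_eq (hf : 1 < f.natDegree) {ℓ : ℕ} (hq : IsPrimitiveRoot q ℓ)
    (hg : g = σ a - q • a) {c : QGHA F q f g} (hc : c ∈ Subalgebra.center F (QGHA F q f g))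
    {N : ℕ} (hN : c ∈ xDegreeLT q f g (N + 1)) :
    ∃ z ∈ Algebra.adjoin F {Z q f g a ^ ℓ}, z ∈ Subalgebra.center F (QGHA F q f g) ∧
      z ∈ xDegreeLT q f g (N + 1) ∧ coeff q f g z (N, N) = coeff q f g c (N, N) := by
  by_cases hp : coeff q f g c (N, N) = 0
  · exact ⟨0, zero_mem _, zero_mem _, zero_mem _, by simp [hp]⟩
  have htop := coeff_diag_of_commute_y q f g (Subalgebra.mem_center_iff.1 hc 𝐲) N
  rw [hN _ _ le_rfl, mul_zero, add_zero, ← comp_eq_aeval] at htop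
  obtain ⟨hpC, hqN⟩ := eq_C_and_eq_one_of_eq_smul_comp hf hp htop
  obtain ⟨t, hNt⟩ := hq.dvd_of_pow_eq_one N hqN
  have hζ : q ^ (N + 1).choose 2 ≠ 0 := by
    rcases N.eq_zero_or_pos with rfl | hN0
    · simp
    · exact pow_ne_zero _ (ne_zero_pow hN0.ne' (by rw [hqN]; exact one_ne_zero))
  refine ⟨((coeff q f g c (N, N)).coeff 0 / q ^ (N + 1).choose 2) • Z q f g a ^ N, ?_, ?_, ?_, ?_⟩
  · rw [hNt, pow_mul]
    exact Subalgebra.smul_mem _ (pow_mem (Algebra.self_mem_adjoin_singleton F _) t) _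
  · exact Subalgebra.smul_mem _ (Z_pow_mem_center q f g hg hqN) _
  · exact Submodule.smul_mem _ _ (Z_pow_mem_xDegreeLT q f g a N)
  · rw [map_smul, Pi.smul_apply, coeff_Z_pow_self, smul_C, smul_eq_mul, div_mul_cancel₀ _ hζ,
      ← hpC]

lemma mem_adjoin_of_mem_center (hf : 1 < f.natDegree) {ℓ : ℕ} (hq : IsPrimitiveRoot q ℓ)
    (hg : g = σ a - q • a) {c : QGHA F q f g} (hc : c ∈ Subalgebra.center F (QGHA F q f g)) :
    c ∈ Algebra.adjoin F {Z q f g a ^ ℓ} := by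
  obtain ⟨N, hN⟩ := exists_mem_xDegreeLT q f g c
  induction N generalizing c with
  | zero => rw [eq_zero_of_mem_xDegreeLT_zero q f g hN]; exact zero_mem _
  | succ N ih =>
    obtain ⟨z, hz, hzc, hzN, hzNN⟩ := exists_mem_adjoin_coeff_eq q f g hf hq hg hc hN
    have hcz : c - z ∈ Subalgebra.center F _ := sub_mem hc hzc
    have := ih hcz (mem_xDegreeLT_of_succ q f g hf (Subalgebra.mem_center_iff.1 hcz 𝐡)
      (sub_mem hN hzN) (by simp [hzNN]))
    simpa using add_mem this hz

end QGHA

theorem qgha_center_root_of_unity_general {F : Type*} [Field F] (q : F) (f g : F[X])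
    (hf : 1 < f.degree) (ℓ : ℕ) (hq : IsPrimitiveRoot q ℓ)
    (a : F[X]) (hg : g = a.comp f - q • a) :
    Subalgebra.center F (QGHA F q f g) =
      Algebra.adjoin F
        {(q • (QGHA.x q f g * QGHA.y q f g - aeval (QGHA.h q f g) a)) ^ ℓ} := by
  rw [comp_eq_aeval] at hg
  have hf' : 1 < f.natDegree := by exact_mod_cast hf.trans_le degree_le_natDegree
  refine le_antisymm (fun c hc => QGHA.mem_adjoin_of_mem_center q f g hf' hq hg hc) ?_
  rw [Algebra.adjoin_le_iff, Set.singleton_subset_iff]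
  exact QGHA.Z_pow_mem_center q f g hg hq.pow_eq_one

/-- Suppose `deg f > 1`, `q` is a primitive `ℓ`-th root of unity and
`g = σ(a) − q·a` for some `a ∈ F[h]`, where `σ` is the endomorphism of `F[h]` with
`σ(h) = f` (so `σ(a) = a ∘ f`).  Set `Z = q(xy − a(h))`.  Then the center of `H_q(f,g)`
is the subalgebra `F[Z^ℓ]` generated by `Z^ℓ`. -/
theorem qgha_center_root_of_unity {F : Type*} [Field F] (q : F) (f g : F[X])
    (hf : 1 < f.degree) (ℓ : ℕ) (hℓ : 0 < ℓ) (hq : IsPrimitiveRoot q ℓ)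
    (a : F[X]) (hg : g = a.comp f - q • a) :
    Subalgebra.center F (QGHA F q f g) =
      Algebra.adjoin F
        {(q • (QGHA.x q f g * QGHA.y q f g - aeval (QGHA.h q f g) a)) ^ ℓ} :=
  qgha_center_root_of_unity_general q f g hf ℓ hq a hg
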